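/- The Black–Scholes vega is positive: for all S > 0, K > 0 and σ > 0, the function σ ↦ C_BS(S, K, σ) is differentiable at σ with derivative S·√T·φ(d₁), where d₁ = log(S/K)/(σ√T) + σ√T/2; in particular this derivative is strictly positive. -/

import Mathlib

open Real Set Filter

/-- Standard normal cdf. -/
noncomputable def stdNormalCDF (x : ℝ) : ℝ :=
  ∫ t in Set.Iio x, Real.exp (-t ^ 2 / 2) / Real.sqrt (2 * Real.pi)

/-- Black–Scholes call price with maturity `T`. -/
noncomputable def C_BS (T S K σ : ℝ) : ℝ :=
  S * stdNormalCDF (Real.log (S / K) / (σ * Real.sqrt T) + σ * Real.sqrt T / 2) -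
  K * stdNormalCDF (Real.log (S / K) / (σ * Real.sqrt T) - σ * Real.sqrt T / 2)

/-- Standard normal density. -/
noncomputable def stdNormalPDF (x : ℝ) : ℝ :=
  Real.exp (-x ^ 2 / 2) / Real.sqrt (2 * Real.pi)

/-! Differentiating `C_BS` in the total volatility `v = σ√T`, the two terms of
`S φ(d₁) d₁' - K φ(d₂) d₂'` combine because `K φ(d₂) = S φ(d₁)`: indeed
`d₁² - d₂² = 2 log (S/K)`. Since `d₁ - d₂ = v` has derivative `1`, what is left is `S φ(d₁)`,
and the chain rule through `σ ↦ σ√T` contributes the factor `√T`. -/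

open MeasureTheory

theorem hasDerivAt_integral_Iio {E : Type*} [NormedAddCommGroup E] [NormedSpace ℝ E]
    [CompleteSpace E] {f : ℝ → E} (hf : Integrable f) {x : ℝ} (hfx : ContinuousAt f x) :
    HasDerivAt (fun y => ∫ t in Iio y, f t) (f x) x := by
  have hsplit : (fun y => ∫ t in Iio y, f t) =
      fun y => (∫ t in Iio 0, f t) + ∫ t in (0 : ℝ)..y, f t := by
    funext y
    rw [← intervalIntegral.integral_Iio_sub_Iio' hf.integrableOn hf.integrableOn, add_sub_cancel]
  rw [hsplit]
  exact (intervalIntegral.integral_hasDerivAt_right hf.intervalIntegrable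
    hf.aestronglyMeasurable.stronglyMeasurableAtFilter hfx).const_add _

theorem continuous_stdNormalPDF : Continuous stdNormalPDF := by
  unfold stdNormalPDF
  fun_prop

theorem integrable_stdNormalPDF : Integrable stdNormalPDF := by
  have hexp : Integrable fun t : ℝ => exp (-(1 / 2) * t ^ 2) :=
    integrable_exp_neg_mul_sq (by norm_num)
  convert hexp.div_const (√(2 * π)) using 2 with t
  rw [stdNormalPDF]
  ring_nf

theorem stdNormalPDF_pos (x : ℝ) : 0 < stdNormalPDF x := by
  unfold stdNormalPDF
  positivity

theorem hasDerivAt_stdNormalCDF (x : ℝ) : HasDerivAt stdNormalCDF (stdNormalPDF x) x :=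
  hasDerivAt_integral_Iio integrable_stdNormalPDF continuous_stdNormalPDF.continuousAt

theorem stdNormalPDF_sub (x v : ℝ) :
    stdNormalPDF (x - v) = exp (x * v - v ^ 2 / 2) * stdNormalPDF x := by
  simp only [stdNormalPDF, mul_div_assoc', ← exp_add]
  ring_nf

noncomputable def bsCallTotalVol (S K v : ℝ) : ℝ :=
  S * stdNormalCDF (log (S / K) / v + v / 2) - K * stdNormalCDF (log (S / K) / v - v / 2)

theorem C_BS_eq_bsCallTotalVol (T S K σ : ℝ) : C_BS T S K σ = bsCallTotalVol S K (σ * √T) :=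
  rfl

theorem mul_stdNormalPDF_d₂_eq {S K v : ℝ} (hS : 0 < S) (hK : 0 < K) (hv : v ≠ 0) :
    K * stdNormalPDF (log (S / K) / v - v / 2) = S * stdNormalPDF (log (S / K) / v + v / 2) := by
  have hexponent : (log (S / K) / v + v / 2) * v - v ^ 2 / 2 = log (S / K) := by
    field_simp
    ring
  rw [show log (S / K) / v - v / 2 = (log (S / K) / v + v / 2) - v by ring, stdNormalPDF_sub,
    hexponent, exp_log (div_pos hS hK), ← mul_assoc, mul_div_cancel₀ S hK.ne']

theorem hasDerivAt_bsCallTotalVol {S K v : ℝ} (hS : 0 < S) (hK : 0 < K) (hv : v ≠ 0) :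
    HasDerivAt (bsCallTotalVol S K) (S * stdNormalPDF (log (S / K) / v + v / 2)) v := by
  set L := log (S / K)
  have hL : HasDerivAt (fun w => L / w) (-L / v ^ 2) v := by
    simpa only [div_eq_mul_inv, neg_mul, mul_neg] using (hasDerivAt_inv hv).const_mul L
  have hhalf : HasDerivAt (fun w : ℝ => w / 2) (1 / 2) v := (hasDerivAt_id v).div_const 2
  have hd₁ := ((hasDerivAt_stdNormalCDF _).comp v (hL.add hhalf)).const_mul S
  have hd₂ := ((hasDerivAt_stdNormalCDF _).comp v (hL.sub hhalf)).const_mul K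
  refine (hd₁.sub hd₂).congr_deriv ?_
  simp only [Pi.add_apply, Pi.sub_apply]
  rw [← mul_assoc K, mul_stdNormalPDF_d₂_eq hS hK hv]
  ring

/-- The Black–Scholes vega is `S·√T·φ(d₁)`, which is strictly positive. -/
theorem C_BS_vega (T : ℝ) (hT : 0 < T) (S K σ : ℝ)
    (hS : 0 < S) (hK : 0 < K) (hσ : 0 < σ) :
    HasDerivAt (fun s => C_BS T S K s)
      (S * Real.sqrt T *
        stdNormalPDF (Real.log (S / K) / (σ * Real.sqrt T) + σ * Real.sqrt T / 2)) σ ∧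
    0 < S * Real.sqrt T *
        stdNormalPDF (Real.log (S / K) / (σ * Real.sqrt T) + σ * Real.sqrt T / 2) := by
  have hφ := stdNormalPDF_pos (log (S / K) / (σ * √T) + σ * √T / 2)
  refine ⟨?_, by positivity⟩
  simp only [C_BS_eq_bsCallTotalVol]
  exact ((hasDerivAt_bsCallTotalVol hS hK (by positivity)).comp σ
    (hasDerivAt_mul_const √T)).congr_deriv (mul_right_comm _ _ _)
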